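/- arXiv:2605.23846 — 5 statements merged into one kernel-verified Lean document; each statement's English description precedes it below -/
import Mathlib

section
/- Suppose the 3×3 matrix subspace L_r is C^r-normal with parameters (p_{1,r}, p_{2,r}, q_{2,r}, q_{3,r}) and L_{r+1} is C^{r+1}-normal with parameters (p_{1,r+1}, p_{2,r+1}, q_{2,r+1}, q_{3,r+1}), and suppose that deleting the first row and first column of L_r gives the same 2×2 subspace as deleting the third row and third column of L_{r+1} (that is, P_{1,1}(L_r) = P_{3,3}(L_{r+1})). Then q_{3,r} = q_{2,r} q_{2,r+1} ρ(C^{r+1}_{3,1}) and p_{1,r+1} = p_{2,r} p_{2,r+1} ρ(C^r_{1,1}). -/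
noncomputable def rho (Y : Matrix (Fin 2) (Fin 2) ℂ) : ℂ :=
  Y 0 0 * Y 1 1 / (Y 0 1 * Y 1 0)

/-- `C_{k,l}`: delete row `k` and column `l` of a 3×3 matrix (0-based indices). -/
def del (k l : Fin 3) (C : Matrix (Fin 3) (Fin 3) ℂ) : Matrix (Fin 2) (Fin 2) ℂ :=
  C.submatrix k.succAbove l.succAbove

/-- Deleting row `k` and column `l`, as a linear map `M₃(ℂ) → M₂(ℂ)`. -/
def delL (k l : Fin 3) : Matrix (Fin 3) (Fin 3) ℂ →ₗ[ℂ] Matrix (Fin 2) (Fin 2) ℂ where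
  toFun X := X.submatrix k.succAbove l.succAbove
  map_add' _ _ := rfl
  map_smul' _ _ := rfl

/-- The five canonical generators `L₁, L₂, Q₁, Q₂, Q₃` of a `C`-normal subspace with
parameters `p₁, p₂, q₂, q₃`. -/
noncomputable def cBasis (C : Matrix (Fin 3) (Fin 3) ℂ) (p₁ p₂ q₂ q₃ : ℂ) :
    Fin 5 → Matrix (Fin 3) (Fin 3) ℂ :=
  ![!![1, 0, 0; rho (del 2 1 C) * q₂, 0, 0; rho (del 1 1 C) * q₃, 0, 0],
    !![0, 1, 0; 0, rho (del 2 0 C) * q₂, 0; 0, rho (del 1 0 C) * q₃, 0],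
    !![0, 0, 1; 0, 0, q₂; 0, 0, q₃],
    !![0, 0, 0; p₁, p₂, 1; 0, 0, 0],
    !![0, 0, 0; 0, 0, 0; rho (del 0 1 C) * p₁, rho (del 0 0 C) * p₂, 1]]

/-- The `C`-normal subspace with parameters `p₁, p₂, q₂, q₃`: the span of the five
canonical generators. -/
noncomputable def cNormal (C : Matrix (Fin 3) (Fin 3) ℂ) (p₁ p₂ q₂ q₃ : ℂ) :
    Submodule ℂ (Matrix (Fin 3) (Fin 3) ℂ) :=
  Submodule.span ℂ (Set.range (cBasis C p₁ p₂ q₂ q₃))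

/-!
The image of a `C`-normal space under `P_{3,3}` is spanned by the images of `L₁, L₂, Q₂`
(those of `Q₁, Q₃` vanish), so every `Y` in it satisfies the single linear relation
`p₂ (Y₂₁ - ρ(C_{3,2}) q₂ Y₁₁) = p₁ (Y₂₂ - ρ(C_{3,1}) q₂ Y₁₂)`.
The images of `Q₁` and `Q₂` of `L_r` under `P_{1,1}` lie in `P_{3,3}(L_{r+1})`, and the relation
for them gives the two identities, once one uses `ρ(C_{3,2}) = ρ(C_{3,1}) ρ(C_{3,3})` and that
`C^r_{1,1} = C^{r+1}_{3,3}` for the compressions of `[b_i - a_j]`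
(indices 1-based, as in the paper).
-/

@[simp]
theorem delL_apply (k l : Fin 3) (X : Matrix (Fin 3) (Fin 3) ℂ) (i j : Fin 2) :
    delL k l X i j = X (k.succAbove i) (l.succAbove j) := rfl

theorem rho_ne_zero {Y : Matrix (Fin 2) (Fin 2) ℂ} (hY : ∀ i j, Y i j ≠ 0) : rho Y ≠ 0 :=
  div_ne_zero (mul_ne_zero (hY 0 0) (hY 1 1)) (mul_ne_zero (hY 0 1) (hY 1 0))

theorem rho_del_two_one_eq_mul (M : Matrix (Fin 3) (Fin 3) ℂ)
    (h₀₁ : M 0 1 ≠ 0) (h₁₁ : M 1 1 ≠ 0) :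
    rho (del 2 1 M) = rho (del 2 0 M) * rho (del 2 2 M) := by
  change M 0 0 * M 1 2 / (M 0 2 * M 1 0) =
    M 0 1 * M 1 2 / (M 0 2 * M 1 1) * (M 0 0 * M 1 1 / (M 0 1 * M 1 0))
  field_simp

theorem relation_of_mem_map_delL_two_two_cNormal {C : Matrix (Fin 3) (Fin 3) ℂ} {p₁ p₂ q₂ q₃ : ℂ}
    {Y : Matrix (Fin 2) (Fin 2) ℂ} (hY : Y ∈ (cNormal C p₁ p₂ q₂ q₃).map (delL 2 2)) :
    p₂ * (Y 1 0 - rho (del 2 1 C) * q₂ * Y 0 0) = p₁ * (Y 1 1 - rho (del 2 0 C) * q₂ * Y 0 1) := by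
  rw [cNormal, Submodule.map_span, ← Set.range_comp] at hY
  induction hY using Submodule.span_induction with
  | mem _ h =>
    obtain ⟨i, rfl⟩ := h
    fin_cases i <;> simp [cBasis, Fin.succAbove, mul_comm]
  | zero => simp
  | add _ _ _ _ hY hZ => simp only [Matrix.add_apply]; linear_combination hY + hZ
  | smul c _ _ hY => simp only [Matrix.smul_apply, smul_eq_mul]; linear_combination c * hY

theorem del_zero_zero_eq_del_two_two_succ (b a : ℕ → ℂ) (C : ℕ → Matrix (Fin 3) (Fin 3) ℂ)
    (hC : ∀ r : ℕ, ∀ i j : Fin 3, C r i j = b (r + i) - a (r + j)) (r : ℕ) :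
    del 0 0 (C r) = del 2 2 (C (r + 1)) := by
  ext i j
  fin_cases i <;> fin_cases j <;> simp [del, hC, Fin.succAbove, add_assoc]

theorem adjacent_cnormal_general (b a : ℕ → ℂ) (hne : ∀ i j : ℕ, b i - a j ≠ 0)
    (C : ℕ → Matrix (Fin 3) (Fin 3) ℂ)
    (hC : ∀ r : ℕ, ∀ i j : Fin 3, C r i j = b (r + i) - a (r + j))
    (r : ℕ) (p₁r p₂r q₂r q₃r p₁r' p₂r' q₂r' q₃r' : ℂ)
    (hp₁r' : p₁r' ≠ 0) (hq₂r' : q₂r' ≠ 0)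
    (hmatch : Submodule.map (delL 0 0) (cNormal (C r) p₁r p₂r q₂r q₃r)
      = Submodule.map (delL 2 2) (cNormal (C (r + 1)) p₁r' p₂r' q₂r' q₃r')) :
    q₃r = q₂r * q₂r' * rho (del 2 0 (C (r + 1))) ∧
    p₁r' = p₂r * p₂r' * rho (del 0 0 (C r)) := by
  have hmem (i : Fin 5) : delL 0 0 (cBasis (C r) p₁r p₂r q₂r q₃r i) ∈
      (cNormal (C (r + 1)) p₁r' p₂r' q₂r' q₃r').map (delL 2 2) :=
    hmatch ▸ Submodule.mem_map_of_mem (Submodule.subset_span ⟨i, rfl⟩)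
  have hQ₁ : p₁r' * (q₃r - rho (del 2 0 (C (r + 1))) * q₂r' * q₂r) = 0 := by
    simpa [cBasis, Fin.succAbove] using relation_of_mem_map_delL_two_two_cNormal (hmem 2)
  have hQ₂ : p₂r' * (rho (del 2 1 (C (r + 1))) * q₂r' * p₂r) =
      p₁r' * (rho (del 2 0 (C (r + 1))) * q₂r') := by
    simpa [cBasis, Fin.succAbove] using relation_of_mem_map_delL_two_two_cNormal (hmem 3)
  have hC' (i j : Fin 3) : C (r + 1) i j ≠ 0 := hC (r + 1) i j ▸ hne _ _
  rw [rho_del_two_one_eq_mul _ (hC' 0 1) (hC' 1 1),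
    ← del_zero_zero_eq_del_two_two_succ b a C hC] at hQ₂
  have hρ : rho (del 2 0 (C (r + 1))) ≠ 0 := rho_ne_zero fun i j => hC' _ _
  constructor
  · linear_combination (mul_eq_zero.mp hQ₁).resolve_left hp₁r'
  · exact mul_right_cancel₀ (mul_ne_zero hq₂r' hρ) (by linear_combination -hQ₂)

/-- Matching of adjacent `C`-normal cross-sections: if `P_{1,1}(L_r) = P_{3,3}(L_{r+1})`,
then `q_{3,r} = q_{2,r} q_{2,r+1} ρ(C^{r+1}_{3,1})` and
`p_{1,r+1} = p_{2,r} p_{2,r+1} ρ(C^r_{1,1})`. -/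
theorem adjacent_cnormal (b a : ℕ → ℂ) (hne : ∀ i j : ℕ, b i - a j ≠ 0)
    (C : ℕ → Matrix (Fin 3) (Fin 3) ℂ)
    (hC : ∀ r : ℕ, ∀ i j : Fin 3, C r i j = b (r + i) - a (r + j))
    (r : ℕ) (p₁r p₂r q₂r q₃r p₁r' p₂r' q₂r' q₃r' : ℂ)
    (hp₁r : p₁r ≠ 0) (hp₂r : p₂r ≠ 0) (hq₂r : q₂r ≠ 0) (hq₃r : q₃r ≠ 0)
    (hp₁r' : p₁r' ≠ 0) (hp₂r' : p₂r' ≠ 0) (hq₂r' : q₂r' ≠ 0) (hq₃r' : q₃r' ≠ 0)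
    (hmatch : Submodule.map (delL 0 0) (cNormal (C r) p₁r p₂r q₂r q₃r)
      = Submodule.map (delL 2 2) (cNormal (C (r + 1)) p₁r' p₂r' q₂r' q₃r')) :
    q₃r = q₂r * q₂r' * rho (del 2 0 (C (r + 1))) ∧
    p₁r' = p₂r * p₂r' * rho (del 0 0 (C r)) :=
  adjacent_cnormal_general b a hne C hC r p₁r p₂r q₂r q₃r p₁r' p₂r' q₂r' q₃r' hp₁r' hq₂r' hmatch
end

section
/- Let b_r, b_{r+1}, b_{r+2}, b_{r+3} be distinct nonzero complex numbers, and suppose L_r is Δ_r-normal of type (T1) with parameters x_r, y_r ∈ ℂ∖{0} and L_{r+1} is Δ_{r+1}-normal of type (T1) with parameters x_{r+1}, y_{r+1} ∈ ℂ∖{0}. Then the subspace P_{1,1}(L_r) of M_2(ℂ) cannot equal the subspace P_{3,3}(L_{r+1}); i.e., two adjacent cross-sections cannot both be of type (T1). -/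
/-- `b_Δ(1) = 1/b₃ - 1/b₂`. -/
noncomputable def bD1 (b₁ b₂ b₃ : ℂ) : ℂ := 1 / b₃ - 1 / b₂
/-- `b_Δ(2) = 1/b₃ - 1/b₁`. -/
noncomputable def bD2 (b₁ b₂ b₃ : ℂ) : ℂ := 1 / b₃ - 1 / b₁
/-- `b_Δ(3) = 1/b₂ - 1/b₁`. -/
noncomputable def bD3 (b₁ b₂ b₃ : ℂ) : ℂ := 1 / b₂ - 1 / b₁

/-- The five canonical generators of a type (T1) `Δ`-normal subspace,
`Δ = diag(b₁,b₂,b₃)`, with parameters `x, y`. -/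
noncomputable def t1Basis (b₁ b₂ b₃ x y : ℂ) : Fin 5 → Matrix (Fin 3) (Fin 3) ℂ :=
  ![!![1, 0, 0; x, 0, 0; y, 0, 0],
    !![1, 1, 0; bD3 b₁ b₂ b₃ * x, x, 0; bD2 b₁ b₂ b₃ * y, y, 0],
    !![0, 0, 1; 0, 0, 0; 0, 0, 0],
    !![0, 0, 0; bD3 b₁ b₂ b₃ / b₂, bD3 b₁ b₂ b₃, 1; 0, 0, 0],
    !![0, 0, 0; 0, 0, 0; bD2 b₁ b₂ b₃ / b₃, bD2 b₁ b₂ b₃, 1]]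

/-- The type (T1) `Δ`-normal subspace with parameters `x, y`. -/
noncomputable def t1Normal (b₁ b₂ b₃ x y : ℂ) : Submodule ℂ (Matrix (Fin 3) (Fin 3) ℂ) :=
  Submodule.span ℂ (Set.range (t1Basis b₁ b₂ b₃ x y))

/-- The five canonical generators of a type (T2) `Δ`-normal subspace,
`Δ = diag(b₁,b₂,b₃)`, with parameters `x, y, q, q'`. -/
noncomputable def t2Basis (b₁ b₂ b₃ x y q q' : ℂ) : Fin 5 → Matrix (Fin 3) (Fin 3) ℂ :=
  ![!![1, 0, 0; x, 0, 0; y, 0, 0],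
    !![1, 1, 0; bD3 b₁ b₂ b₃ * x, x, 0; bD2 b₁ b₂ b₃ * y, y, 0],
    !![0, 0, 1; q', q, 0; q' * y / x + bD1 b₁ b₂ b₃ * q * y / x, q * y / x, 0],
    !![0, 0, 0; bD3 b₁ b₂ b₃ / b₂ - q' / x, bD3 b₁ b₂ b₃ - q / x, 1; 0, 0, 0],
    !![0, 0, 0; 0, 0, 0;
       bD2 b₁ b₂ b₃ / b₃ - bD1 b₁ b₂ b₃ * q / x - q' / x, bD2 b₁ b₂ b₃ - q / x, 1]]

/-- The type (T2) `Δ`-normal subspace with parameters `x, y, q, q'`. -/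
noncomputable def t2Normal (b₁ b₂ b₃ x y q q' : ℂ) :
    Submodule ℂ (Matrix (Fin 3) (Fin 3) ℂ) :=
  Submodule.span ℂ (Set.range (t2Basis b₁ b₂ b₃ x y q q'))

/-- The five canonical generators of a strongly `Δ`-normal subspace,
`Δ = diag(b₁,b₂,b₃)`, with parameters `x, y, q`. -/
noncomputable def strongBasis (b₁ b₂ b₃ x y q : ℂ) : Fin 5 → Matrix (Fin 3) (Fin 3) ℂ :=
  ![!![1, 0, 0; x, 0, 0; y, 0, 0],
    !![0, 1, 0; bD3 b₁ b₂ b₃ * x, x, 0; bD2 b₁ b₂ b₃ * y, y, 0],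
    !![0, 0, 1; q / b₂, q, 0; -y / (b₁ * b₃), -y / b₁, 0],
    !![0, 0, 0; 1 / b₂ ^ 2, 1 / b₂, 1; 0, 0, 0],
    !![0, 0, 0; 0, 0, 0; 1 / b₃ ^ 2, 1 / b₃, 1]]

/-- The strongly `Δ`-normal subspace with parameters `x, y, q`. -/
noncomputable def strongNormal (b₁ b₂ b₃ x y q : ℂ) :
    Submodule ℂ (Matrix (Fin 3) (Fin 3) ℂ) :=
  Submodule.span ℂ (Set.range (strongBasis b₁ b₂ b₃ x y q))

/-- The 3×3 lower Jordan cell. -/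
def J3 : Matrix (Fin 3) (Fin 3) ℂ := !![0, 0, 0; 1, 0, 0; 0, 1, 0]

/-!
Every matrix `M` of `P_{3,3}(L)`, for `L` of type (T1) with parameters `x, y` and
`Δ = diag(b₁, b₂, b₃)`, satisfies the linear relation
`M₂₁ - M₂₂ / b₂ = x M₁₁ - x (1 + 1/b₁) M₁₂`, as one checks on the five generators.
The image under `P_{1,1}` of the generator `Q₃` of `L_r` is `[[0, 0], [b_Δ(2), 1]]`; if it lay
in `P_{3,3}(L_{r+1})` the relation would give `1/b_{r+2} - 1/b_r = 1/b_{r+2}`, impossible as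
`b_r ≠ 0`.
-/

theorem delL_zero_zero_t1Basis_four (b₁ b₂ b₃ x y : ℂ) :
    delL 0 0 (t1Basis b₁ b₂ b₃ x y 4) = !![0, 0; bD2 b₁ b₂ b₃, 1] := by
  ext i j
  fin_cases i <;> fin_cases j <;> rfl

theorem entry_relation_of_mem_t1Normal {b₁ b₂ b₃ x y : ℂ} {N : Matrix (Fin 3) (Fin 3) ℂ}
    (hN : N ∈ t1Normal b₁ b₂ b₃ x y) :
    N 1 0 - N 1 1 / b₂ = x * N 0 0 - x * (1 + 1 / b₁) * N 0 1 := by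
  induction hN using Submodule.span_induction with
  | mem _ hN =>
    obtain ⟨i, rfl⟩ := hN
    fin_cases i <;> simp [t1Basis, bD3]
    ring
  | zero => simp
  | add _ _ _ _ hN hN' =>
    simp only [Matrix.add_apply]
    linear_combination hN + hN'
  | smul a _ _ hN =>
    simp only [Matrix.smul_apply, smul_eq_mul]
    linear_combination a * hN

theorem entry_relation_of_mem_map_delL_two_two {b₁ b₂ b₃ x y : ℂ}
    {M : Matrix (Fin 2) (Fin 2) ℂ} (hM : M ∈ (t1Normal b₁ b₂ b₃ x y).map (delL 2 2)) :
    M 1 0 - M 1 1 / b₂ = x * M 0 0 - x * (1 + 1 / b₁) * M 0 1 := by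
  obtain ⟨N, hN, rfl⟩ := hM
  exact entry_relation_of_mem_t1Normal hN

theorem t1_t1_no_match_general (b : ℕ → ℂ) (r : ℕ)
    (hb : ∀ k, k ∈ Finset.Icc r (r + 3) → b k ≠ 0)
    (xr yr xr' yr' : ℂ) :
    Submodule.map (delL 0 0) (t1Normal (b r) (b (r + 1)) (b (r + 2)) xr yr)
      ≠ Submodule.map (delL 2 2) (t1Normal (b (r + 1)) (b (r + 2)) (b (r + 3)) xr' yr') := by
  intro h
  have hQ₃ : !![0, 0; bD2 (b r) (b (r + 1)) (b (r + 2)), 1]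
      ∈ (t1Normal (b r) (b (r + 1)) (b (r + 2)) xr yr).map (delL 0 0) :=
    delL_zero_zero_t1Basis_four (b r) (b (r + 1)) (b (r + 2)) xr yr ▸
      Submodule.mem_map_of_mem (Submodule.subset_span ⟨4, rfl⟩)
  have hrel := entry_relation_of_mem_map_delL_two_two (h ▸ hQ₃)
  simp only [bD2, Matrix.of_apply, Matrix.cons_val', Matrix.cons_val_zero, Matrix.cons_val_one,
    Matrix.empty_val', Matrix.cons_val_fin_one, mul_zero, sub_zero] at hrel
  exact hb r (by simp) (by simpa using hrel)

/-- Two adjacent cross-sections cannot both be of type (T1):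
`P_{1,1}(L_r) ≠ P_{3,3}(L_{r+1})`. -/
theorem t1_t1_no_match (b : ℕ → ℂ) (r : ℕ)
    (hb : ∀ k, k ∈ Finset.Icc r (r + 3) → b k ≠ 0)
    (hbd : ∀ k l, k ∈ Finset.Icc r (r + 3) → l ∈ Finset.Icc r (r + 3) → k ≠ l → b k ≠ b l)
    (xr yr xr' yr' : ℂ) (hxr : xr ≠ 0) (hyr : yr ≠ 0) (hxr' : xr' ≠ 0) (hyr' : yr' ≠ 0) :
    Submodule.map (delL 0 0) (t1Normal (b r) (b (r + 1)) (b (r + 2)) xr yr)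
      ≠ Submodule.map (delL 2 2) (t1Normal (b (r + 1)) (b (r + 2)) (b (r + 3)) xr' yr') :=
  t1_t1_no_match_general b r hb xr yr xr' yr'
end

section
/- Let Δ = diag(b_1, b_2, b_3) with distinct nonzero b_i, and let L be Δ-normal of type (T2) with parameters x, y, q ∈ ℂ∖{0}, q' ∈ ℂ. Then the image subspace P_{3,3}(L) ⊆ M_2(ℂ) has dimension 3 if q' = q/b_2, and dimension 4 otherwise. -/
/-! Deleting the third row and column kills the fifth generator and leaves four `2 × 2`
matrices. The first two are independent modulo matrices with zero first row, where the other
two live; their bottom rows `(q', q)` and `(b_Δ(3)/b₂ - q'/x, b_Δ(3) - q/x)` have determinant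
`b_Δ(3) (q' - q/b₂)`, and `b_Δ(3) ≠ 0` because `b₁ ≠ b₂`. -/

open Submodule

section

variable {K : Type*} [Field K]

theorem smul_zero_top_row (c a b : K) : c • !![0, 0; a, b] = !![0, 0; c * a, c * b] := by
  simp only [Matrix.smul_of, Matrix.smul_cons, Matrix.smul_empty, smul_eq_mul, mul_zero]

theorem linearIndependent_three_of_ne_zero (x u a b : K) (hb : b ≠ 0) :
    LinearIndependent K ![!![1, 0; x, 0], !![1, 1; u, x], !![0, 0; a, b]] := by
  rw [Fintype.linearIndependent_iff]
  intro k hk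
  have h00 : k 0 + k 1 = 0 := by simpa [Fin.sum_univ_three] using congrFun (congrFun hk 0) 0
  have h01 : k 1 = 0 := by simpa [Fin.sum_univ_three] using congrFun (congrFun hk 0) 1
  have h11 : k 1 * x + k 2 * b = 0 := by
    simpa [Fin.sum_univ_three] using congrFun (congrFun hk 1) 1
  intro i; fin_cases i <;> simp_all

theorem linearIndependent_four_of_det_ne_zero (x u a b c d : K) (h : a * d - b * c ≠ 0) :
    LinearIndependent K ![!![1, 0; x, 0], !![1, 1; u, x], !![0, 0; a, b], !![0, 0; c, d]] := by
  rw [Fintype.linearIndependent_iff]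
  intro k hk
  have h00 : k 0 + k 1 = 0 := by simpa [Fin.sum_univ_four] using congrFun (congrFun hk 0) 0
  have h01 : k 1 = 0 := by simpa [Fin.sum_univ_four] using congrFun (congrFun hk 0) 1
  have h10 : k 0 * x + k 1 * u + k 2 * a + k 3 * c = 0 := by
    simpa [Fin.sum_univ_four] using congrFun (congrFun hk 1) 0
  have h11 : k 1 * x + k 2 * b + k 3 * d = 0 := by
    simpa [Fin.sum_univ_four] using congrFun (congrFun hk 1) 1
  have h0 : k 0 = 0 := by simpa [h01] using h00
  simp only [h0, h01, zero_mul, zero_add] at h10 h11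
  have h2 : k 2 * (a * d - b * c) = 0 := by linear_combination d * h10 - c * h11
  have h3 : k 3 * (a * d - b * c) = 0 := by linear_combination a * h11 - b * h10
  intro i; fin_cases i <;> simp_all

theorem span_range_smul_smul {M : Type*} [AddCommGroup M] [Module K M] (v w e : M) {s : K}
    (t : K) (hs : s ≠ 0) :
    span K (Set.range ![v, w, s • e, t • e]) = span K (Set.range ![v, w, e]) := by
  have hpair : span K {s • e, t • e} = K ∙ e := by
    apply le_antisymm
    · rw [span_le, Set.pair_subset_iff]
      exact ⟨smul_mem _ _ (mem_span_singleton_self e), smul_mem _ _ (mem_span_singleton_self e)⟩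
    · rw [← span_singleton_smul_eq (IsUnit.mk0 s hs)]
      exact span_mono (by simp)
  simp only [Matrix.range_cons, Matrix.range_empty, Set.union_empty, Set.singleton_union]
  rw [span_insert, span_insert, hpair, span_insert, span_insert]

end

theorem bD3_ne_zero {b₁ b₂ : ℂ} (b₃ : ℂ) (h12 : b₁ ≠ b₂) : bD3 b₁ b₂ b₃ ≠ 0 := by
  rw [bD3, sub_ne_zero, one_div, one_div, Ne, inv_inj]
  exact h12.symm

theorem delL_two_two_apply (m : Matrix (Fin 3) (Fin 3) ℂ) :
    delL 2 2 m = !![m 0 0, m 0 1; m 1 0, m 1 1] := by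
  ext i j
  fin_cases i <;> fin_cases j <;> rfl

theorem map_delL_two_two_t2Normal (b₁ b₂ b₃ x y q q' : ℂ) :
    (t2Normal b₁ b₂ b₃ x y q q').map (delL 2 2) =
      span ℂ (Set.range ![!![1, 0; x, 0], !![1, 1; bD3 b₁ b₂ b₃ * x, x], !![0, 0; q', q],
        !![0, 0; bD3 b₁ b₂ b₃ / b₂ - q' / x, bD3 b₁ b₂ b₃ - q / x]]) := by
  have hzero : (!![0, 0; 0, 0] : Matrix (Fin 2) (Fin 2) ℂ) = 0 := by
    ext i j; fin_cases i <;> fin_cases j <;> rfl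
  rw [t2Normal, map_span]
  simp only [Matrix.range_cons, Matrix.range_empty, Set.union_empty, Set.singleton_union,
    Set.image_insert_eq, Set.image_singleton, delL_two_two_apply, t2Basis, Matrix.of_apply,
    Matrix.cons_val_zero, Matrix.cons_val_one]
  rw [hzero]
  simp only [Set.pair_comm _ (0 : Matrix (Fin 2) (Fin 2) ℂ),
    Set.insert_comm _ (0 : Matrix (Fin 2) (Fin 2) ℂ), span_insert_zero]

theorem t2_p33_dim_general (b₁ b₂ b₃ : ℂ) (h12 : b₁ ≠ b₂)
    (x y q : ℂ) (q' : ℂ) (hq : q ≠ 0) :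
    (q' = q / b₂ →
      Module.finrank ℂ (Submodule.map (delL 2 2) (t2Normal b₁ b₂ b₃ x y q q')) = 3) ∧
    (q' ≠ q / b₂ →
      Module.finrank ℂ (Submodule.map (delL 2 2) (t2Normal b₁ b₂ b₃ x y q q')) = 4) := by
  set d := bD3 b₁ b₂ b₃
  rw [map_delL_two_two_t2Normal]
  constructor
  · rintro rfl
    have hA : !![(0 : ℂ), 0; q / b₂, q] = q • !![0, 0; 1 / b₂, 1] := by
      rw [smul_zero_top_row]; ring_nf
    have hB : !![(0 : ℂ), 0; d / b₂ - q / b₂ / x, d - q / x] =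
        (d - q / x) • !![0, 0; 1 / b₂, 1] := by
      rw [smul_zero_top_row]; ring_nf
    rw [hA, hB, span_range_smul_smul _ _ _ _ hq,
      finrank_span_eq_card (linearIndependent_three_of_ne_zero _ _ _ _ one_ne_zero),
      Fintype.card_fin]
  · intro hq'
    have hdet : q' * (d - q / x) - q * (d / b₂ - q' / x) = d * (q' - q / b₂) := by ring
    rw [finrank_span_eq_card (linearIndependent_four_of_det_ne_zero _ _ _ _ _ _ (by
      rw [hdet]; exact mul_ne_zero (bD3_ne_zero b₃ h12) (sub_ne_zero.mpr hq'))), Fintype.card_fin]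

/-- For a type (T2) `Δ`-normal subspace `L`, the image `P_{3,3}(L)` has dimension 3
when `q' = q/b₂`, and dimension 4 otherwise. -/
theorem t2_p33_dim (b₁ b₂ b₃ : ℂ) (hb₁ : b₁ ≠ 0) (hb₂ : b₂ ≠ 0) (hb₃ : b₃ ≠ 0)
    (h12 : b₁ ≠ b₂) (h13 : b₁ ≠ b₃) (h23 : b₂ ≠ b₃)
    (x y q : ℂ) (q' : ℂ) (hx : x ≠ 0) (hy : y ≠ 0) (hq : q ≠ 0) :
    (q' = q / b₂ →
      Module.finrank ℂ (Submodule.map (delL 2 2) (t2Normal b₁ b₂ b₃ x y q q')) = 3) ∧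
    (q' ≠ q / b₂ →
      Module.finrank ℂ (Submodule.map (delL 2 2) (t2Normal b₁ b₂ b₃ x y q q')) = 4) :=
  t2_p33_dim_general b₁ b₂ b₃ h12 x y q q' hq
end

section
/- Let Δ = diag(b_1, b_2, b_3) with distinct nonzero b_i, and let L be Δ-normal of type (T2) with parameters x, y, q ∈ ℂ∖{0}, q' ∈ ℂ. Then the image subspace P_{1,1}(L) ⊆ M_2(ℂ) has dimension 3, with basis [[x, 0],[y, 0]], [[b_Δ(3) − q/x, 1],[0, 0]], [[0, 0],[b_Δ(2) − q/x, 1]]. -/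
section Aux

open Matrix

lemma delL00_apply (X : Matrix (Fin 3) (Fin 3) ℂ) (i j : Fin 2) :
    delL 0 0 X i j = X i.succ j.succ := rfl

lemma t2_images (b₁ b₂ b₃ x y q q' : ℂ) (hx : x ≠ 0) :
    (delL 0 0) ∘ (t2Basis b₁ b₂ b₃ x y q q') =
    ![(0 : Matrix (Fin 2) (Fin 2) ℂ),
      !![x, 0; y, 0],
      (q / x) • !![x, 0; y, 0],
      !![bD3 b₁ b₂ b₃ - q / x, 1; 0, 0],
      !![0, 0; bD2 b₁ b₂ b₃ - q / x, 1]] := by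
  funext k
  fin_cases k <;>
    · ext i j
      fin_cases i <;> fin_cases j <;>
        simp [delL00_apply, t2Basis, Matrix.smul_apply, Matrix.vecHead,
          Matrix.vecTail] <;>
        field_simp

end Aux

/-- For a type (T2) `Δ`-normal subspace `L`, the image `P_{1,1}(L)` has dimension 3,
with the stated basis. -/
theorem t2_p11_dim (b₁ b₂ b₃ : ℂ) (hb₁ : b₁ ≠ 0) (hb₂ : b₂ ≠ 0) (hb₃ : b₃ ≠ 0)
    (h12 : b₁ ≠ b₂) (h13 : b₁ ≠ b₃) (h23 : b₂ ≠ b₃)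
    (x y q : ℂ) (q' : ℂ) (hx : x ≠ 0) (hy : y ≠ 0) (hq : q ≠ 0) :
    Module.finrank ℂ (Submodule.map (delL 0 0) (t2Normal b₁ b₂ b₃ x y q q')) = 3 ∧
    LinearIndependent ℂ
      ![(!![x, 0; y, 0] : Matrix (Fin 2) (Fin 2) ℂ),
        !![bD3 b₁ b₂ b₃ - q / x, 1; 0, 0],
        !![0, 0; bD2 b₁ b₂ b₃ - q / x, 1]] ∧
    Submodule.map (delL 0 0) (t2Normal b₁ b₂ b₃ x y q q')
      = Submodule.span ℂ (Set.range
          ![(!![x, 0; y, 0] : Matrix (Fin 2) (Fin 2) ℂ),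
            !![bD3 b₁ b₂ b₃ - q / x, 1; 0, 0],
            !![0, 0; bD2 b₁ b₂ b₃ - q / x, 1]]) := by
  
  set v : Fin 3 → Matrix (Fin 2) (Fin 2) ℂ :=
    ![(!![x, 0; y, 0] : Matrix (Fin 2) (Fin 2) ℂ),
      !![bD3 b₁ b₂ b₃ - q / x, 1; 0, 0],
      !![0, 0; bD2 b₁ b₂ b₃ - q / x, 1]] with hv
  have hli : LinearIndependent ℂ v := by
    rw [Fintype.linearIndependent_iff]
    intro g hg
    have h01 := congrFun (congrFun hg 0) 1
    have h11 := congrFun (congrFun hg 1) 1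
    have h00 := congrFun (congrFun hg 0) 0
    simp only [hv, Fin.sum_univ_three, Matrix.add_apply, Matrix.smul_apply,
      smul_eq_mul] at h01 h11 h00
    simp at h01 h11 h00
    have hg1 : g 1 = 0 := h01
    have hg2 : g 2 = 0 := h11
    have hg0 : g 0 = 0 := by
      simp [hg1, hx] at h00
      exact h00
    intro i; fin_cases i <;> assumption
  have hspan : Submodule.map (delL 0 0) (t2Normal b₁ b₂ b₃ x y q q')
      = Submodule.span ℂ (Set.range v) := by
    rw [t2Normal, Submodule.map_span, ← Set.range_comp,
      t2_images b₁ b₂ b₃ x y q q' hx]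
    apply le_antisymm
    · rw [Submodule.span_le]
      rintro _ ⟨k, rfl⟩
      fin_cases k
      · exact Submodule.zero_mem _
      · exact Submodule.subset_span ⟨0, rfl⟩
      · exact Submodule.smul_mem _ _ (Submodule.subset_span ⟨0, rfl⟩)
      · exact Submodule.subset_span ⟨1, rfl⟩
      · exact Submodule.subset_span ⟨2, rfl⟩
    · rw [Submodule.span_le]
      rintro _ ⟨k, rfl⟩
      fin_cases k
      · exact Submodule.subset_span ⟨1, rfl⟩
      · exact Submodule.subset_span ⟨3, rfl⟩
      · exact Submodule.subset_span ⟨4, rfl⟩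
  refine ⟨?_, hli, hspan⟩
  rw [hspan, finrank_span_eq_card hli]
  simp
end

section
/- Let C be a 3×3 matrix with nonzero entries and L a C-normal subspace with parameters p_1, p_2, q_2, q_3 ∈ ℂ∖{0}. Then for every X ∈ L, the entrywise (Schur) product C ∘ X is a singular matrix, i.e., det(C ∘ X) = 0. -/
/-- A 3×3 matrix whose rows all lie in the span of two vectors. -/
def rowdep (x₁ x₂ x₃ y₁ y₂ y₃ α β s t : ℂ) : Matrix (Fin 3) (Fin 3) ℂ :=
  !![x₁, x₂, x₃;
     α * x₁ + s * y₁, α * x₂ + s * y₂, α * x₃ + s * y₃;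
     β * x₁ + t * y₁, β * x₂ + t * y₂, β * x₃ + t * y₃]

lemma det_rowdep (x₁ x₂ x₃ y₁ y₂ y₃ α β s t : ℂ) :
    (rowdep x₁ x₂ x₃ y₁ y₂ y₃ α β s t).det = 0 := by
  simp [rowdep, Matrix.det_fin_three]; ring

set_option maxHeartbeats 1600000 in
/-- For every `X` in a `C`-normal subspace, the Schur (entrywise) product `C ∘ X`
is singular. -/
theorem cnormal_schur_singular (C : Matrix (Fin 3) (Fin 3) ℂ) (hC : ∀ i j, C i j ≠ 0)
    (p₁ p₂ q₂ q₃ : ℂ) (hp₁ : p₁ ≠ 0) (hp₂ : p₂ ≠ 0) (hq₂ : q₂ ≠ 0) (hq₃ : q₃ ≠ 0)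
    (X : Matrix (Fin 3) (Fin 3) ℂ) (hX : X ∈ cNormal C p₁ p₂ q₂ q₃) :
    Matrix.det (Matrix.of fun i j => C i j * X i j) = 0 := by
  obtain ⟨c, hc⟩ := (Submodule.mem_span_range_iff_exists_fun ℂ).1 hX
  subst hc
  have h02 := hC 0 2; have h10 := hC 1 0; have h11 := hC 1 1
  have h12 := hC 1 2; have h20 := hC 2 0; have h21 := hC 2 1
  have e1 : rho (del 2 1 C) = C 0 0 * C 1 2 / (C 0 2 * C 1 0) := rfl
  have e2 : rho (del 1 1 C) = C 0 0 * C 2 2 / (C 0 2 * C 2 0) := rfl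
  have e3 : rho (del 2 0 C) = C 0 1 * C 1 2 / (C 0 2 * C 1 1) := rfl
  have e4 : rho (del 1 0 C) = C 0 1 * C 2 2 / (C 0 2 * C 2 1) := rfl
  have e5 : rho (del 0 1 C) = C 1 0 * C 2 2 / (C 1 2 * C 2 0) := rfl
  have e6 : rho (del 0 0 C) = C 1 1 * C 2 2 / (C 1 2 * C 2 1) := rfl
  have F2 : ∀ h : 2 < 3, (⟨2, h⟩ : Fin 3) = 2 := fun _ => rfl
  have Z : ∀ n : ℕ, Matrix.vecHead (Matrix.vecTail fun _ : Fin (n+2) => (0:ℂ)) = 0 := fun _ => rfl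
  have key : (Matrix.of fun i j => C i j * (∑ i, c i • cBasis C p₁ p₂ q₂ q₃ i) i j) =
      rowdep (C 0 0 * c 0) (C 0 1 * c 1) (C 0 2 * c 2)
        (C 1 0 * p₁) (C 1 1 * p₂) (C 1 2)
        (q₂ * C 1 2 / C 0 2) (q₃ * C 2 2 / C 0 2) (c 3) (c 4 * C 2 2 / C 1 2) := by
    ext i j
    fin_cases i <;> fin_cases j <;>
      · simp [Matrix.of_apply, Fin.sum_univ_five, cBasis, e1, e2, e3, e4, e5, e6,
          rowdep, F2, Matrix.sum_apply, Matrix.vecHead, Matrix.vecTail, Function.comp_apply] <;>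
        field_simp <;> first | ring | exact Or.inl rfl
  rw [key]
  exact det_rowdep _ _ _ _ _ _ _ _ _ _
end
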